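/- Let μ be a regular uncountable cardinal, γ an ordinal, S ⊆ μ stationary, and f : S → γ strictly increasing. Then there is a club C ⊆ μ and a strictly increasing total function f* : μ → γ such that f* agrees with f on S ∩ C. -/

import Mathlib

/-- `o` is an accumulation point of `C`. -/
def IsAcc (o : Ordinal) (C : Set Ordinal) : Prop :=
  o ≠ 0 ∧ ∀ b < o, ∃ c ∈ C, b < c ∧ c < o

/-- `C` is closed and unbounded (a club) in `μ`. -/
def IsClubIn (C : Set Ordinal) (μ : Ordinal) : Prop :=
  (∀ o < μ, IsAcc o C → o ∈ C) ∧ ∀ b < μ, ∃ c ∈ C, b < c ∧ c < μ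

/-- `S` is a stationary subset of `μ`. -/
def IsStationaryIn (S : Set Ordinal) (μ : Ordinal) : Prop :=
  S ⊆ Set.Iio μ ∧ ∀ C : Set Ordinal, IsClubIn C μ → (S ∩ C).Nonempty


/-! On a club `C₀` the map `f` grows fast: `f β + α ≤ f α` for `β < α` in `S ∩ C₀`. Otherwise
`f α = f β + ξ` with `ξ < α`, and closing `C₀` under `(β, ξ) ↦` the least `δ ∈ S` with
`f δ ≥ f β + ξ` produces such a `δ < α`, contradicting monotonicity.

Let `C` be the set of accumulation points of `S ∩ C₀`. Put `g = f` on `S ∩ C` and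
`g α = f α⁺ + α` elsewhere, where `α⁺` is the least point of `S ∩ C₀` above `α`. For `α < α'`
with `α' ∈ S ∩ C`, the point `α'` is a limit of `S ∩ C₀`, so `α⁺ < α'` and
`g α < f α⁺ + α' ≤ f α'`. -/

universe u v

open Set

theorem IsAcc.mono {o : Ordinal} {C D : Set Ordinal} (h : C ⊆ D) (hC : IsAcc o C) : IsAcc o D :=
  ⟨hC.1, fun b hb => let ⟨c, hc, hbc, hco⟩ := hC.2 b hb; ⟨c, h hc, hbc, hco⟩⟩

section NextIn

/-- The least element of `T` strictly above `α`, or `0` if there is none. -/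
noncomputable def nextIn (T : Set Ordinal.{u}) (α : Ordinal.{u}) : Ordinal.{u} :=
  sInf {x ∈ T | α < x}

variable {T : Set Ordinal.{u}} {α x : Ordinal.{u}}

theorem nextIn_le (hx : x ∈ T) (hαx : α < x) : nextIn T α ≤ x :=
  csInf_le' ⟨hx, hαx⟩

theorem nextIn_mem (hx : x ∈ T) (hαx : α < x) : nextIn T α ∈ T ∧ α < nextIn T α :=
  csInf_mem (s := {x ∈ T | α < x}) ⟨x, hx, hαx⟩

end NextIn

section Clubs

variable {o b : Ordinal.{u}} {C S T : Set Ordinal.{u}}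

theorem IsClubIn.inter_Ioi (hC : IsClubIn C o) (hb : b < o) : IsClubIn (C ∩ Ioi b) o := by
  refine ⟨fun x hx hacc => ⟨hC.1 x hx (hacc.mono inter_subset_left), ?_⟩, fun b' hb' => ?_⟩
  · obtain ⟨c, hc, -, hcx⟩ := hacc.2 0 (pos_iff_ne_zero.2 hacc.1)
    exact hc.2.trans hcx
  · obtain ⟨c, hc, hbc, hco⟩ := hC.2 (max b b') (max_lt hb hb')
    exact ⟨c, ⟨hc, (le_max_left b b').trans_lt hbc⟩, (le_max_right b b').trans_lt hbc, hco⟩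

theorem IsStationaryIn.exists_mem_inter_gt (hS : IsStationaryIn S o) (hC : IsClubIn C o)
    (hb : b < o) : ∃ c ∈ S ∩ C, b < c ∧ c < o := by
  obtain ⟨c, hcS, hcC, hbc⟩ := hS.2 _ (hC.inter_Ioi hb)
  exact ⟨c, ⟨hcS, hcC⟩, hbc, hS.1 hcS⟩

theorem isClubIn_setOf_isAcc (ho : Cardinal.aleph0 < o.cof)
    (hT : ∀ b < o, ∃ c ∈ T, b < c ∧ c < o) :
    IsClubIn {α | IsAcc α T} o := by
  refine ⟨fun α _ hα => ⟨hα.1, fun b hb => ?_⟩, fun b hb => ?_⟩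
  · obtain ⟨c, hc, hbc, hcα⟩ := hα.2 b hb
    obtain ⟨d, hd, hbd, hdc⟩ := hc.2 b hbc
    exact ⟨d, hd, hbd, hdc.trans hcα⟩
  have hnext : ∀ x < o, nextIn T x ∈ T ∧ x < nextIn T x ∧ nextIn T x < o := fun x hx =>
    let ⟨c, hc, hxc, hco⟩ := hT x hx
    ⟨(nextIn_mem hc hxc).1, (nextIn_mem hc hxc).2, (nextIn_le hc hxc).trans_lt hco⟩
  -- the supremum of an `ω`-sequence in `T` is an accumulation point of `T`
  obtain ⟨c, -, hbc, hco⟩ := hT b hb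
  set a := fun n => (nextIn T)^[n] c
  have hlt : Ordinal.nfp (nextIn T) c < o :=
    Ordinal.nfp_lt_ord ho (fun x hx => (hnext x hx).2.2) hco
  have ha : ∀ n, a n < o := fun n => (Ordinal.iterate_le_nfp _ c n).trans_lt hlt
  refine ⟨_, ⟨(hbc.trans_le (Ordinal.le_nfp _ c)).ne_bot, fun x hx => ?_⟩,
    hbc.trans_le (Ordinal.le_nfp _ c), hlt⟩
  obtain ⟨n, hn⟩ := Ordinal.lt_nfp_iff.1 hx
  have hsucc : ∀ n, a (n + 1) = nextIn T (a n) := fun n => Function.iterate_succ_apply' _ n c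
  refine ⟨a (n + 1), ?_, hn.trans ?_, ?_⟩
  · rw [hsucc]; exact (hnext _ (ha n)).1
  · rw [hsucc]; exact (hnext _ (ha n)).2.1
  · calc a (n + 1) < a (n + 2) := by rw [hsucc (n + 1)]; exact (hnext _ (ha _)).2.1
      _ ≤ _ := Ordinal.iterate_le_nfp _ c _

end Clubs

theorem Cardinal.IsRegular.iSup_Iio_lt_ord {μ : Cardinal.{u}} (hμ : μ.IsRegular)
    {x : Ordinal.{u}} (hx : x < μ.ord) {h : Iio x → Ordinal.{u}} (hh : ∀ i, h i < μ.ord) :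
    ⨆ i, h i < μ.ord := by
  refine Ordinal.lift_iSup_lt_of_lt_cof ?_ hh
  rwa [← Ordinal.lift_cof, hμ.cof_ord, Cardinal.mk_Iio_ordinal, Cardinal.lift_lift,
    Cardinal.lift_lt, ← Cardinal.lt_ord]

theorem isClubIn_setOf_map₂_lt {μ : Cardinal.{u}} (hreg : μ.IsRegular)
    (hunc : Cardinal.aleph0 < μ) {φ : Ordinal.{u} → Ordinal.{u} → Ordinal.{u}}
    (hφ : ∀ β < μ.ord, ∀ ξ < μ.ord, φ β ξ < μ.ord) :
    IsClubIn {α | ∀ β < α, ∀ ξ < α, φ β ξ < α} μ.ord := by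
  refine ⟨fun α _ hα β hβ ξ hξ => ?_, fun b hb => ?_⟩
  · obtain ⟨c, hc, hβξc, hcα⟩ := hα.2 (max β ξ) (max_lt hβ hξ)
    exact (hc β ((le_max_left β ξ).trans_lt hβξc) ξ ((le_max_right β ξ).trans_lt hβξc)).trans hcα
  set F : Ordinal.{u} → Ordinal.{u} := fun x => ⨆ β : Iio x, ⨆ ξ : Iio x, Order.succ (φ β ξ)
  have hF : ∀ x, ∀ β < x, ∀ ξ < x, φ β ξ < F x := fun x β hβ ξ hξ =>
    (Order.lt_succ _).trans_le <|
      (Ordinal.le_iSup (fun ξ : Iio x => Order.succ (φ β ξ)) ⟨ξ, hξ⟩).trans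
        (Ordinal.le_iSup (fun β : Iio x => ⨆ ξ : Iio x, Order.succ (φ β ξ)) ⟨β, hβ⟩)
  have hFlt : ∀ x < μ.ord, F x < μ.ord := fun x hx =>
    hreg.iSup_Iio_lt_ord hx fun β => hreg.iSup_Iio_lt_ord hx fun ξ =>
      (Cardinal.isSuccLimit_ord hunc.le).succ_lt (hφ β (β.2.trans hx) ξ (ξ.2.trans hx))
  have hb' : Order.succ b < μ.ord := (Cardinal.isSuccLimit_ord hunc.le).succ_lt hb
  refine ⟨Ordinal.nfp F (Order.succ b), fun β hβ ξ hξ => ?_,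
    (Order.lt_succ b).trans_le (Ordinal.le_nfp F _),
    Ordinal.nfp_lt_ord (by rwa [hreg.cof_ord]) hFlt hb'⟩
  obtain ⟨n, hn⟩ := Ordinal.lt_nfp_iff.1 (max_lt hβ hξ)
  calc φ β ξ < F (F^[n] (Order.succ b)) :=
        hF _ β ((le_max_left β ξ).trans_lt hn) ξ ((le_max_right β ξ).trans_lt hn)
    _ = F^[n + 1] (Order.succ b) := (Function.iterate_succ_apply' F n _).symm
    _ ≤ _ := Ordinal.iterate_le_nfp F _ _

theorem exists_isClubIn_add_le {μ : Cardinal.{u}} (hreg : μ.IsRegular)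
    (hunc : Cardinal.aleph0 < μ) {S : Set Ordinal.{u}} (hS : S ⊆ Iio μ.ord)
    {f : Ordinal.{u} → Ordinal.{max u v}} (hf : StrictMonoOn f S) :
    ∃ C, IsClubIn C μ.ord ∧ ∀ α ∈ S ∩ C, ∀ β ∈ S, β < α → f β + Ordinal.lift.{v} α ≤ f α := by
  set φ : Ordinal.{u} → Ordinal.{u} → Ordinal.{u} :=
    fun β ξ => sInf {δ ∈ S | f β + Ordinal.lift.{v} ξ ≤ f δ}
  have hφ : ∀ β < μ.ord, ∀ ξ < μ.ord, φ β ξ < μ.ord := by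
    intro β _ ξ _
    rcases eq_empty_or_nonempty {δ ∈ S | f β + Ordinal.lift.{v} ξ ≤ f δ} with h | h
    · simp only [φ, h, Ordinal.sInf_empty]
      exact Cardinal.ord_pos.2 (Cardinal.aleph0_pos.trans hunc)
    · exact hS (csInf_mem h).1
  refine ⟨_, isClubIn_setOf_map₂_lt hreg hunc hφ, fun α ⟨hαS, hαC⟩ β hβ hβα => ?_⟩
  by_contra! hlt
  obtain ⟨ξ, hξα, hξ⟩ := Ordinal.lt_lift_iff.1 <|
    Ordinal.sub_lt_of_lt_add hlt (zero_le.trans_lt (Ordinal.lift_lt.2 hβα))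
  have hfα : f β + Ordinal.lift.{v} ξ = f α := by
    rw [hξ, Ordinal.add_sub_cancel_of_le (hf.monotoneOn hβ hαS hβα.le)]
  have hδ := csInf_mem (s := {δ ∈ S | f β + Ordinal.lift.{v} ξ ≤ f δ}) ⟨α, hαS, hfα.le⟩
  exact (hδ.2.trans_lt (hf hδ.1 hαS (hαC β hβα ξ hξα))).ne hfα

section Interpolant

noncomputable def interpolant (T T' : Set Ordinal.{u}) (f : Ordinal.{u} → Ordinal.{max u v})
    (α : Ordinal.{u}) : Ordinal.{max u v} :=
  open Classical in
  if α ∈ T then f α else f (nextIn T' α) + Ordinal.lift.{v} α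

variable {T T' : Set Ordinal.{u}} {f : Ordinal.{u} → Ordinal.{max u v}} {α α' : Ordinal.{u}}

theorem interpolant_of_mem (h : α ∈ T) : interpolant T T' f α = f α := by
  simp [interpolant, h]

theorem interpolant_of_notMem (h : α ∉ T) :
    interpolant T T' f α = f (nextIn T' α) + Ordinal.lift.{v} α := by
  simp [interpolant, h]

variable (hTT' : T ⊆ T') (hf : StrictMonoOn f T')
  (hgap : ∀ α ∈ T, ∀ β ∈ T', β < α → f β + Ordinal.lift.{v} α ≤ f α)
  (hacc : ∀ α ∈ T, IsAcc α T')
include hTT' hf hgap hacc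

theorem interpolant_lt_of_lt_of_mem (hαα' : α < α') (hα' : α' ∈ T) :
    interpolant T T' f α < f α' := by
  by_cases hα : α ∈ T
  · rw [interpolant_of_mem hα]
    exact hf (hTT' hα) (hTT' hα') hαα'
  obtain ⟨β, hβ, hαβ, hβα'⟩ := (hacc α' hα').2 α hαα'
  have hnext := nextIn_mem hβ hαβ
  rw [interpolant_of_notMem hα]
  calc f (nextIn T' α) + Ordinal.lift.{v} α < f (nextIn T' α) + Ordinal.lift.{v} α' :=
        add_lt_add_right (Ordinal.lift_lt.2 hαα') _
    _ ≤ f α' := hgap α' hα' _ hnext.1 ((nextIn_le hβ hαβ).trans_lt hβα')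

theorem strictMonoOn_interpolant {o : Ordinal.{u}} (hT' : ∀ α < o, ∃ β ∈ T', α < β) :
    StrictMonoOn (interpolant T T' f) (Iio o) := by
  intro α _ α' hα'o hαα'
  by_cases hα' : α' ∈ T
  · rw [interpolant_of_mem (T' := T') hα']
    exact interpolant_lt_of_lt_of_mem hTT' hf hgap hacc hαα' hα'
  obtain ⟨β, hβ, hα'β⟩ := hT' α' hα'o
  have hnext' := nextIn_mem hβ hα'β
  rw [interpolant_of_notMem hα']
  by_cases hα : α ∈ T
  · rw [interpolant_of_mem hα]
    exact (hf (hTT' hα) hnext'.1 (hαα'.trans hnext'.2)).trans_le le_self_add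
  · have hnext := nextIn_mem hnext'.1 (hαα'.trans hnext'.2)
    rw [interpolant_of_notMem hα]
    exact add_lt_add_of_le_of_lt
      (hf.monotoneOn hnext.1 hnext'.1 (nextIn_le hnext'.1 (hαα'.trans hnext'.2)))
      (Ordinal.lift_lt.2 hαα')

end Interpolant

theorem exists_lift_eq_of_lt_lift {ι : Type*} {p : ι → Prop} {g : ι → Ordinal.{max v u}}
    {γ : Ordinal.{v}} (h : ∀ i, p i → g i < Ordinal.lift.{u} γ) :
    ∃ g' : ι → Ordinal.{v}, ∀ i, p i → Ordinal.lift.{u} (g' i) = g i := by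
  have : ∀ i, ∃ y : Ordinal.{v}, p i → Ordinal.lift.{u} y = g i := fun i => by
    by_cases hi : p i
    · obtain ⟨y, -, hy⟩ := Ordinal.lt_lift_iff.1 (h i hi)
      exact ⟨y, fun _ => hy⟩
    · exact ⟨0, fun h => absurd h hi⟩
  choose g' hg' using this
  exact ⟨g', hg'⟩

/-- Interpolation: a strictly increasing `f : S → γ` on a stationary `S ⊆ μ`
agrees on `S ∩ C` (for some club `C`) with a strictly increasing total
function `f* : μ → γ`. -/
theorem stmt7 (μ : Cardinal) (hreg : μ.IsRegular) (hunc : Cardinal.aleph0 < μ)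
    (γ : Ordinal) (S : Set Ordinal) (hS : IsStationaryIn S μ.ord)
    (f : Ordinal → Ordinal)
    (hrange : ∀ α ∈ S, f α < γ)
    (hmono : ∀ α ∈ S, ∀ β ∈ S, α < β → f α < f β) :
    ∃ C : Set Ordinal, IsClubIn C μ.ord ∧
      ∃ g : Ordinal → Ordinal,
        (∀ α < μ.ord, g α < γ) ∧
        (∀ α β : Ordinal, α < β → β < μ.ord → g α < g β) ∧
        ∀ α ∈ S ∩ C, g α = f α := by
  -- `f β + α` mixes universes, so compute in `Ordinal.{max u_1 u_2}` and lower at the end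
  set F := fun α => Ordinal.lift.{u_1} (f α)
  have hF : StrictMonoOn F S := fun α hα β hβ h => Ordinal.lift_lt.2 (hmono α hα β hβ h)
  obtain ⟨C₀, hC₀, hgap⟩ := exists_isClubIn_add_le hreg hunc hS.1 hF
  set C := {α | IsAcc α (S ∩ C₀)}
  have hC : IsClubIn C μ.ord :=
    isClubIn_setOf_isAcc (by rwa [hreg.cof_ord]) fun b hb => hS.exists_mem_inter_gt hC₀ hb
  have hCC₀ : S ∩ C ⊆ S ∩ C₀ := fun α hα =>
    ⟨hα.1, hC₀.1 α (hS.1 hα.1) (hα.2.mono inter_subset_right)⟩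
  have hgap' : ∀ α ∈ S ∩ C, ∀ β ∈ S ∩ C₀, β < α → F β + Ordinal.lift α ≤ F α :=
    fun α hα β hβ => hgap α (hCC₀ hα) β hβ.1
  have hF₀ : StrictMonoOn F (S ∩ C₀) := hF.mono inter_subset_left
  have hacc : ∀ α ∈ S ∩ C, IsAcc α (S ∩ C₀) := fun _ hα => hα.2
  set G := interpolant (S ∩ C) (S ∩ C₀) F
  have hGγ : ∀ α < μ.ord, G α < Ordinal.lift γ := fun α hα =>
    let ⟨α', hα', hαα', _⟩ := hS.exists_mem_inter_gt hC hα
    (interpolant_lt_of_lt_of_mem hCC₀ hF₀ hgap' hacc hαα' hα').trans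
      (Ordinal.lift_lt.2 (hrange α' hα'.1))
  obtain ⟨g, hg⟩ := exists_lift_eq_of_lt_lift hGγ
  refine ⟨C, hC, g, fun α hα => ?_, fun α β hαβ hβ => ?_, fun α hα => ?_⟩
  · exact Ordinal.lift_lt.1 ((hg α hα).trans_lt (hGγ α hα))
  · rw [← Ordinal.lift_lt, hg α (hαβ.trans hβ), hg β hβ]
    exact strictMonoOn_interpolant hCC₀ hF₀ hgap' hacc
      (fun b hb => (hS.exists_mem_inter_gt hC₀ hb).imp fun _ h => ⟨h.1, h.2.1⟩)
      (hαβ.trans hβ) hβ hαβ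
  · rw [← Ordinal.lift_inj, hg α (hS.1 hα.1)]
    exact interpolant_of_mem hα
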